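/- Let 0 < γ < 1, g_k^γ = (-1)^k binomial(γ,k), and let (‖ε^n‖)_{n≥0} be nonnegative reals satisfying ‖ε^n‖ ≤ (∑_{k=0}^{n-1} g_k^γ) ‖ε^0‖ - ∑_{k=1}^{n-1} g_k^γ ‖ε^{n-k}‖ for all n ≥ 1. Then ‖ε^n‖ ≤ ‖ε^0‖ for all n ≥ 1. -/
import Mathlib


/-- Generalized binomial coefficient `binomial(x, k) = x(x-1)⋯(x-k+1)/k!`. -/
noncomputable def genBinom (x : ℝ) (k : ℕ) : ℝ :=
  (∏ i ∈ Finset.range k, (x - i)) / (Nat.factorial k)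

/-- Grünwald coefficients `g_k^γ = (-1)^k binomial(γ, k)`. -/
noncomputable def g (x : ℝ) (k : ℕ) : ℝ := (-1 : ℝ) ^ k * genBinom x k

lemma g_zero (x : ℝ) : g x 0 = 1 := by simp [g, genBinom]

lemma prod_sign (γ : ℝ) (hγ1 : 0 < γ) (hγ2 : γ < 1) :
    ∀ k, 1 ≤ k → (-1 : ℝ) ^ k * ∏ i ∈ Finset.range k, (γ - i) ≤ 0 := by
  intro k hk
  induction k with
  | zero => omega
  | succ m ih =>
    rcases Nat.eq_or_lt_of_le hk with h | h
    · simp only [← h]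
      simp only [Finset.range_one, Finset.prod_singleton, pow_one]
      push_cast
      nlinarith
    · have hm : 1 ≤ m := by omega
      have := ih hm
      rw [Finset.prod_range_succ, pow_succ]
      have hfac : (0 : ℝ) ≤ (m : ℝ) - γ := by
        have : (1 : ℝ) ≤ (m : ℝ) := by exact_mod_cast hm
        linarith
      have : (-1 : ℝ) ^ m * (-1) * ((∏ i ∈ Finset.range m, (γ - i)) * (γ - m))
          = ((-1 : ℝ) ^ m * ∏ i ∈ Finset.range m, (γ - i)) * ((m : ℝ) - γ) := by ring
      rw [this]
      exact mul_nonpos_of_nonpos_of_nonneg (ih hm) hfac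

lemma g_nonpos (γ : ℝ) (hγ1 : 0 < γ) (hγ2 : γ < 1) (k : ℕ) (hk : 1 ≤ k) :
    g γ k ≤ 0 := by
  have h := prod_sign γ hγ1 hγ2 k hk
  have hfac : (0 : ℝ) < (Nat.factorial k : ℝ) := by
    exact_mod_cast Nat.factorial_pos k
  unfold g genBinom
  rw [← mul_div_assoc]
  exact div_nonpos_of_nonpos_of_nonneg h hfac.le

lemma sum_split (γ : ℝ) (n : ℕ) (hn : 1 ≤ n) :
    ∑ k ∈ Finset.range n, g γ k = g γ 0 + ∑ k ∈ Finset.Icc 1 (n - 1), g γ k := by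
  obtain ⟨m, rfl⟩ := Nat.exists_eq_add_of_le hn
  simp only [Nat.add_sub_cancel_left, Nat.add_comm 1 m]
  rw [Finset.sum_range_succ', ← Finset.Ico_add_one_right_eq_Icc, Finset.sum_Ico_eq_sum_range]
  simp [add_comm]

theorem stmt17 (γ : ℝ) (hγ1 : 0 < γ) (hγ2 : γ < 1)
    (ε : ℕ → ℝ) (hnn : ∀ n, 0 ≤ ε n)
    (hrec : ∀ n, 1 ≤ n →
      ε n ≤ (∑ k ∈ Finset.range n, g γ k) * ε 0
        - ∑ k ∈ Finset.Icc 1 (n - 1), g γ k * ε (n - k)) :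
    ∀ n, 1 ≤ n → ε n ≤ ε 0 := by
  intro n
  induction n using Nat.strong_induction_on with
  | _ n ih =>
    intro hn
    have h1 := hrec n hn
    have hsum : ∑ k ∈ Finset.Icc 1 (n - 1), g γ k * ε 0
        ≤ ∑ k ∈ Finset.Icc 1 (n - 1), g γ k * ε (n - k) := by
      apply Finset.sum_le_sum
      intro k hk
      rw [Finset.mem_Icc] at hk
      have hk1 : 1 ≤ k := hk.1
      have hnk1 : 1 ≤ n - k := by omega
      have hnklt : n - k < n := by omega
      have hle : ε (n - k) ≤ ε 0 := ih (n - k) hnklt hnk1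
      exact mul_le_mul_of_nonpos_left hle (g_nonpos γ hγ1 hγ2 k hk1)
    have h2 : ε n ≤ (∑ k ∈ Finset.range n, g γ k) * ε 0
        - ∑ k ∈ Finset.Icc 1 (n - 1), g γ k * ε 0 := by linarith
    rw [sum_split γ n hn, g_zero] at h2
    rw [← Finset.sum_mul] at h2
    linarith [h2]
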